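/- arXiv:1905.02445 — 3 statements merged into one kernel-verified Lean document; each statement's English description precedes it below -/
import Mathlib

section
/- Let G ⊆ K_{m,n} be a connected bipartite graph and let A = A₁ ⊔ A₂ be a two-sided independent set (∅ ≠ A₁ ⊊ U₁, ∅ ≠ A₂ ⊊ U₂). If the ℝ-linear span of H_{A₁} ∩ σ_G^∨ has dimension m+n−2 (i.e., H_{A₁} ∩ σ_G^∨ is a facet of σ_G^∨), then there exists a set A₂' with A₂ ⊆ A₂' ⊊ U₂ such that A' = A₁ ⊔ A₂' is a maximal two-sided independent set of G. -/
/-!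
Common setup: a bipartite graph `G ⊆ K_{m,n}` is encoded by an edge relation
`E : Fin m → Fin n → Prop` (vertex set `V = Fin m ⊕ Fin n`, with `U₁` the left
summand and `U₂` the right summand).
-/

namespace ToricBipartite

open Sum Finset

variable {m n : ℕ}

/-- The simple graph on `Fin m ⊕ Fin n` determined by the bipartite edge relation `E`. -/
def toGraph (E : Fin m → Fin n → Prop) : SimpleGraph (Fin m ⊕ Fin n) where
  Adj u v :=
    (∃ i j, u = inl i ∧ v = inr j ∧ E i j) ∨ (∃ i j, u = inr j ∧ v = inl i ∧ E i j)
  symm := by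
    constructor
    rintro u v (⟨i, j, hu, hv, h⟩ | ⟨i, j, hu, hv, h⟩)
    · exact Or.inr ⟨i, j, hv, hu, h⟩
    · exact Or.inl ⟨i, j, hv, hu, h⟩
  loopless := by
    constructor
    rintro u (⟨i, j, hu, hv, h⟩ | ⟨i, j, hu, hv, h⟩) <;> rw [hu] at hv <;> simp at hv

/-- The generator `e^i + f^j` of the dual edge cone. -/
def gen (i : Fin m) (j : Fin n) : (Fin m ⊕ Fin n) → ℝ :=
  Pi.single (inl i) 1 + Pi.single (inr j) 1

/-- The set of generators `{e^i + f^j : (i, m+j) ∈ E(G)}` of the dual edge cone. -/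
def genSet (E : Fin m → Fin n → Prop) : Set ((Fin m ⊕ Fin n) → ℝ) :=
  {x | ∃ i j, E i j ∧ x = gen i j}

/-- The dual edge cone `σ_G^∨ ⊆ ℝ^{m+n}`: all nonnegative combinations of the
generators `e^i + f^j` over the edges of `G`. -/
def dualEdgeCone (E : Fin m → Fin n → Prop) : Set ((Fin m ⊕ Fin n) → ℝ) :=
  {x | ∃ c : Fin m → Fin n → ℝ, (∀ i j, 0 ≤ c i j) ∧ (∀ i j, c i j ≠ 0 → E i j) ∧
      x = ∑ i, ∑ j, c i j • gen i j}

/-- The neighbour set `N(A) ⊆ U₂` of a set `A ⊆ U₁`. -/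
def nbrR (E : Fin m → Fin n → Prop) [∀ i j, Decidable (E i j)]
    (A : Finset (Fin m)) : Finset (Fin n) :=
  univ.filter fun j => ∃ i ∈ A, E i j

/-- The neighbour set `N(B) ⊆ U₁` of a set `B ⊆ U₂`. -/
def nbrL (E : Fin m → Fin n → Prop) [∀ i j, Decidable (E i j)]
    (B : Finset (Fin n)) : Finset (Fin m) :=
  univ.filter fun i => ∃ j ∈ B, E i j

/-- `A₁ ⊔ A₂ ⊆ U₁ ⊔ U₂` contains no pair of adjacent vertices (since the graph is
bipartite this says there is no edge between `A₁` and `A₂`). -/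
def IsIndepPair (E : Fin m → Fin n → Prop)
    (A₁ : Finset (Fin m)) (A₂ : Finset (Fin n)) : Prop :=
  ∀ i ∈ A₁, ∀ j ∈ A₂, ¬ E i j

/-- A two-sided independent set `B₁ ⊔ B₂`, with `∅ ≠ B₁ ⊊ U₁` and `∅ ≠ B₂ ⊊ U₂`. -/
def TwoSidedIndep (E : Fin m → Fin n → Prop)
    (B₁ : Finset (Fin m)) (B₂ : Finset (Fin n)) : Prop :=
  B₁.Nonempty ∧ B₁ ≠ univ ∧ B₂.Nonempty ∧ B₂ ≠ univ ∧ IsIndepPair E B₁ B₂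

/-- A two-sided *maximal* independent set: two-sided independent, and contained in no
strictly larger independent set of the graph. -/
def TwoSidedMaxIndep (E : Fin m → Fin n → Prop)
    (A₁ : Finset (Fin m)) (A₂ : Finset (Fin n)) : Prop :=
  TwoSidedIndep E A₁ A₂ ∧
    ∀ B₁ B₂, IsIndepPair E B₁ B₂ → A₁ ⊆ B₁ → A₂ ⊆ B₂ → B₁ = A₁ ∧ B₂ = A₂

/-- Membership in `I_G^(*)`: either a two-sided maximal independent set, or a one-sided
independent set of the form `U_i ∖ {v}` not contained in any two-sided independent set.
A set is encoded as the pair of its parts `(A₁, A₂) = (A ∩ U₁, A ∩ U₂)`. -/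
def InIStar (E : Fin m → Fin n → Prop)
    (A₁ : Finset (Fin m)) (A₂ : Finset (Fin n)) : Prop :=
  TwoSidedMaxIndep E A₁ A₂ ∨
    (A₂ = ∅ ∧ A₁.Nonempty ∧ (∃ v, A₁ = {v}ᶜ) ∧
      ¬ ∃ B₁ B₂, TwoSidedIndep E B₁ B₂ ∧ A₁ ⊆ B₁) ∨
    (A₁ = ∅ ∧ A₂.Nonempty ∧ (∃ v, A₂ = {v}ᶜ) ∧
      ¬ ∃ B₁ B₂, TwoSidedIndep E B₁ B₂ ∧ A₂ ⊆ B₂)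

/-- The edge relation of the associated (spanning) subgraph `G{A}` of `A ∈ I_G^(*)`:
for one-sided `A = A₁ ⊆ U₁` the edges of `G[A₁ ⊔ N(A₁)] ⊔ G[(U₁∖A₁) ⊔ (U₂∖N(A₁))]`,
symmetrically for one-sided `A = A₂ ⊆ U₂`, and for two-sided `A = A₁ ⊔ A₂` the edges of
`G[A₁ ⊔ N(A₁)] ⊔ G[A₂ ⊔ N(A₂)]`. -/
def assoc (E : Fin m → Fin n → Prop) [∀ i j, Decidable (E i j)]
    (A₁ : Finset (Fin m)) (A₂ : Finset (Fin n)) : Fin m → Fin n → Prop := fun i j =>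
  E i j ∧
    (if A₂ = ∅ then i ∈ A₁ ∨ j ∉ nbrR E A₁
     else if A₁ = ∅ then j ∈ A₂ ∨ i ∉ nbrL E A₂
     else i ∈ A₁ ∨ j ∈ A₂)

instance (E : Fin m → Fin n → Prop) [∀ i j, Decidable (E i j)]
    (A₁ : Finset (Fin m)) (A₂ : Finset (Fin n)) (i : Fin m) (j : Fin n) :
    Decidable (assoc E A₁ A₂ i j) := by
  unfold assoc; infer_instance

/-- The number of connected components of the bipartite graph with edge relation `E`
(isolated vertices count as connected components). -/
noncomputable def numComponents (E : Fin m → Fin n → Prop) : ℕ :=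
  Nat.card (toGraph E).ConnectedComponent

/-- `A ∈ I_G^(1)`: a first independent set, i.e. an element of `I_G^(*)` whose associated
subgraph `G{A}` has exactly two connected components. -/
def FirstIndep (E : Fin m → Fin n → Prop) [∀ i j, Decidable (E i j)]
    (A₁ : Finset (Fin m)) (A₂ : Finset (Fin n)) : Prop :=
  InIStar E A₁ A₂ ∧ numComponents (assoc E A₁ A₂) = 2

/-- The supporting hyperplane `H_{A₁}` of a one-sided set `A₁ ⊆ U₁`:
`Σ_{v ∈ A₁} x_v = Σ_{v ∈ N(A₁)} x_v`. -/
def hyp1 (E : Fin m → Fin n → Prop) [∀ i j, Decidable (E i j)]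
    (A₁ : Finset (Fin m)) : Set ((Fin m ⊕ Fin n) → ℝ) :=
  {x | ∑ i ∈ A₁, x (inl i) = ∑ j ∈ nbrR E A₁, x (inr j)}

/-- The supporting hyperplane `H_{A₂}` of a one-sided set `A₂ ⊆ U₂`. -/
def hyp2 (E : Fin m → Fin n → Prop) [∀ i j, Decidable (E i j)]
    (A₂ : Finset (Fin n)) : Set ((Fin m ⊕ Fin n) → ℝ) :=
  {x | ∑ j ∈ A₂, x (inr j) = ∑ i ∈ nbrL E A₂, x (inl i)}

/-- The supporting hyperplane `H_A` of `A = A₁ ⊔ A₂`, taken with respect to a nonempty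
one-sided part of `A`. -/
def hypA (E : Fin m → Fin n → Prop) [∀ i j, Decidable (E i j)]
    (A₁ : Finset (Fin m)) (A₂ : Finset (Fin n)) : Set ((Fin m ⊕ Fin n) → ℝ) :=
  if A₁ = ∅ then hyp2 E A₂ else hyp1 E A₁

/-- Connectivity of the induced subgraph `G[S ⊔ T]` for `S ⊆ U₁`, `T ⊆ U₂`. -/
def InducedConnected (E : Fin m → Fin n → Prop)
    (S : Finset (Fin m)) (T : Finset (Fin n)) : Prop :=
  ((toGraph E).induce
    ((inl '' (S : Set (Fin m)) ∪ inr '' (T : Set (Fin n))) : Set (Fin m ⊕ Fin n))).Connected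

/-- The degree (valency) sequence of the bipartite graph with edge relation `E`,
as a vector in `ℝ^{m+n}`. -/
def valVec (E : Fin m → Fin n → Prop) [∀ i j, Decidable (E i j)] :
    (Fin m ⊕ Fin n) → ℝ :=
  Sum.elim (fun i => ((univ.filter fun j => E i j).card : ℝ))
    (fun j => ((univ.filter fun i => E i j).card : ℝ))

/-! Put `A₂' = U₂ ∖ N(A₁)`. This is the largest set independent from `A₁`, and connectivity makes
`N(A₁)` nonempty, so `A₁ ⊔ A₂'` is two-sided; it can only fail to be maximal through a vertex
`i₀ ∉ A₁` with `N(i₀) ⊆ N(A₁)`. On `H_{A₁} ∩ σ_G^∨` the balance of `H_{A₁}` forces every edge at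
such an `i₀` to carry weight zero, so `x_{i₀} = 0` there. Together with `x ∈ H_{A₁}` and the
balance `Σ_{U₁} x = Σ_{U₂} x` of the whole cone this gives three independent linear conditions,
so the span has dimension at most `m + n - 3`, and `H_{A₁} ∩ σ_G^∨` is not a facet. -/

theorem _root_.Submodule.finrank_span_add_finrank_le_of_subset_ker {K V W : Type*} [Field K]
    [AddCommGroup V] [Module K V] [FiniteDimensional K V] [AddCommGroup W] [Module K W]
    {f : V →ₗ[K] W} (hf : Function.Surjective f) {s : Set V} (hs : s ⊆ LinearMap.ker f) :
    Module.finrank K (Submodule.span K s) + Module.finrank K W ≤ Module.finrank K V := by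
  have hrank := f.finrank_range_add_finrank_ker
  rw [LinearMap.range_eq_top.mpr hf, finrank_top] at hrank
  have hle := Submodule.finrank_mono (Submodule.span_le.mpr hs)
  omega

lemma toGraph_adj_inl {E : Fin m → Fin n → Prop} {i : Fin m} {v : Fin m ⊕ Fin n} :
    (toGraph E).Adj (inl i) v ↔ ∃ j, v = inr j ∧ E i j := by
  simp [toGraph]

lemma exists_adj_of_connected {E : Fin m → Fin n → Prop} (hconn : (toGraph E).Connected)
    (i : Fin m) (j₀ : Fin n) : ∃ j, E i j := by
  have : Nontrivial (Fin m ⊕ Fin n) := nontrivial_of_ne (inl i) (inr j₀) inl_ne_inr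
  obtain ⟨v, hv⟩ := hconn.preconnected.exists_adj_of_nontrivial (inl i)
  obtain ⟨j, -, hj⟩ := toGraph_adj_inl.mp hv
  exact ⟨j, hj⟩

lemma sum_smul_gen_apply_inl (c : Fin m → Fin n → ℝ) (i : Fin m) :
    (∑ i', ∑ j, c i' j • gen i' j) (inl i) = ∑ j, c i j := by
  simp [gen, Pi.single_apply]

lemma sum_smul_gen_apply_inr (c : Fin m → Fin n → ℝ) (j : Fin n) :
    (∑ i, ∑ j', c i j' • gen i j') (inr j) = ∑ i, c i j := by
  simp [gen, Pi.single_apply]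

lemma sum_inl_eq_sum_inr_of_mem_dualEdgeCone {E : Fin m → Fin n → Prop}
    {x : (Fin m ⊕ Fin n) → ℝ} (hx : x ∈ dualEdgeCone E) :
    ∑ i, x (inl i) = ∑ j, x (inr j) := by
  obtain ⟨c, -, -, rfl⟩ := hx
  simp only [sum_smul_gen_apply_inl, sum_smul_gen_apply_inr]
  exact sum_comm

section Neighbours

variable {E : Fin m → Fin n → Prop} [∀ i j, Decidable (E i j)] {A₁ : Finset (Fin m)}

lemma mem_nbrR {j : Fin n} : j ∈ nbrR E A₁ ↔ ∃ i ∈ A₁, E i j := by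
  simp [nbrR]

lemma isIndepPair_iff_subset_compl_nbrR {B : Finset (Fin n)} :
    IsIndepPair E A₁ B ↔ B ⊆ (nbrR E A₁)ᶜ := by
  simp only [IsIndepPair, subset_iff, mem_compl, mem_nbrR]
  aesop

lemma nbrR_mono {B₁ : Finset (Fin m)} (h : A₁ ⊆ B₁) : nbrR E A₁ ⊆ nbrR E B₁ := by
  intro j hj
  obtain ⟨i, hi, hij⟩ := mem_nbrR.mp hj
  exact mem_nbrR.mpr ⟨i, h hi, hij⟩

lemma twoSidedMaxIndep_compl_nbrR (hA₁ : A₁.Nonempty) (hA₁' : A₁ ≠ univ)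
    (hN : (nbrR E A₁).Nonempty) (hNc : (nbrR E A₁)ᶜ.Nonempty)
    (hclosed : ∀ i, (∀ j, E i j → j ∈ nbrR E A₁) → i ∈ A₁) :
    TwoSidedMaxIndep E A₁ (nbrR E A₁)ᶜ := by
  refine ⟨⟨hA₁, hA₁', hNc, (compl_ne_univ_iff_nonempty _).mpr hN, ?_⟩,
    fun B₁ B₂ hB h₁ h₂ => ⟨?_, ?_⟩⟩
  · exact isIndepPair_iff_subset_compl_nbrR.mpr subset_rfl
  · refine subset_antisymm (fun i hi => hclosed i fun j hij => ?_) h₁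
    by_contra hj
    exact hB i hi j (h₂ (mem_compl.mpr hj)) hij
  · refine subset_antisymm ?_ h₂
    exact (isIndepPair_iff_subset_compl_nbrR.mp hB).trans (compl_subset_compl.mpr (nbrR_mono h₁))

noncomputable def facetTestMap (E : Fin m → Fin n → Prop) [∀ i j, Decidable (E i j)]
    (A₁ : Finset (Fin m)) (i₀ : Fin m) : ((Fin m ⊕ Fin n) → ℝ) →ₗ[ℝ] (Fin 3 → ℝ) :=
  LinearMap.pi ![LinearMap.proj (inl i₀),
    ∑ i ∈ A₁, LinearMap.proj (R := ℝ) (φ := fun _ => ℝ) (inl i) -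
      ∑ j ∈ nbrR E A₁, LinearMap.proj (inr j),
    ∑ i, LinearMap.proj (R := ℝ) (φ := fun _ => ℝ) (inl i) - ∑ j, LinearMap.proj (inr j)]

lemma facetTestMap_apply (i₀ : Fin m) (x : (Fin m ⊕ Fin n) → ℝ) :
    facetTestMap E A₁ i₀ x = ![x (inl i₀),
      ∑ i ∈ A₁, x (inl i) - ∑ j ∈ nbrR E A₁, x (inr j),
      ∑ i, x (inl i) - ∑ j, x (inr j)] := by
  funext k
  fin_cases k <;> simp [facetTestMap]

lemma facetTestMap_surjective {i₀ a : Fin m} {j₂ : Fin n}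
    (ha : a ∈ A₁) (hi₀ : i₀ ∉ A₁) (hj₂ : j₂ ∉ nbrR E A₁) :
    Function.Surjective (facetTestMap E A₁ i₀) := by
  intro t
  have hi₀a : i₀ ≠ a := ne_of_mem_of_not_mem ha hi₀ |>.symm
  refine ⟨t 0 • Pi.single (inl i₀) 1 + t 1 • Pi.single (inl a) 1 +
    (t 0 + t 1 - t 2) • Pi.single (inr j₂) 1, ?_⟩
  rw [facetTestMap_apply]
  funext k
  fin_cases k <;>
    simp [Pi.single_apply, sum_add_distrib, hi₀a, ha, hi₀, hj₂]

lemma apply_inl_eq_zero_of_mem_hyp1_inter_dualEdgeCone {i₀ : Fin m} (hi₀ : i₀ ∉ A₁)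
    (hnb : ∀ j, E i₀ j → j ∈ nbrR E A₁) {x : (Fin m ⊕ Fin n) → ℝ}
    (hx : x ∈ hyp1 E A₁ ∩ dualEdgeCone E) : x (inl i₀) = 0 := by
  obtain ⟨hx, c, hc, hcE, rfl⟩ := hx
  simp only [hyp1, Set.mem_ofPred_eq, sum_smul_gen_apply_inl, sum_smul_gen_apply_inr] at hx ⊢
  set S := nbrR E A₁
  have row_eq : ∀ i, (∀ j, E i j → j ∈ S) → ∑ j, c i j = ∑ j ∈ S, c i j := fun i hi =>
    (sum_subset (subset_univ S) fun j _ hj => by_contra fun hne => hj (hi j (hcE i j hne))).symm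
  -- `H_{A₁}` says that the edges at `A₁` carry all the weight at `N(A₁)`.
  have hbal : ∑ i ∈ A₁, ∑ j ∈ S, c i j = ∑ i, ∑ j ∈ S, c i j := by
    rw [← sum_congr rfl fun i hi => row_eq i fun j hij => mem_nbrR.mpr ⟨i, hi, hij⟩, hx,
      sum_comm]
  have hle : ∑ i ∈ insert i₀ A₁, ∑ j ∈ S, c i j ≤ ∑ i, ∑ j ∈ S, c i j :=
    sum_le_sum_of_subset_of_nonneg (subset_univ _) fun i _ _ => sum_nonneg fun j _ => hc i j
  rw [sum_insert hi₀] at hle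
  rw [row_eq i₀ hnb]
  exact le_antisymm (by linarith) (sum_nonneg fun j _ => hc i₀ j)

lemma hyp1_inter_dualEdgeCone_subset_ker {i₀ : Fin m} (hi₀ : i₀ ∉ A₁)
    (hnb : ∀ j, E i₀ j → j ∈ nbrR E A₁) :
    hyp1 E A₁ ∩ dualEdgeCone E ⊆ LinearMap.ker (facetTestMap E A₁ i₀) := by
  intro x hx
  rw [SetLike.mem_coe, LinearMap.mem_ker, facetTestMap_apply,
    apply_inl_eq_zero_of_mem_hyp1_inter_dualEdgeCone hi₀ hnb hx, sub_eq_zero.mpr hx.1,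
    sub_eq_zero.mpr (sum_inl_eq_sum_inr_of_mem_dualEdgeCone hx.2)]
  simp

lemma finrank_span_hyp1_inter_dualEdgeCone_add_three_le {i₀ a : Fin m} {j₂ : Fin n}
    (ha : a ∈ A₁) (hi₀ : i₀ ∉ A₁) (hj₂ : j₂ ∉ nbrR E A₁)
    (hnb : ∀ j, E i₀ j → j ∈ nbrR E A₁) :
    Module.finrank ℝ (Submodule.span ℝ (hyp1 E A₁ ∩ dualEdgeCone E)) + 3 ≤ m + n := by
  simpa using Submodule.finrank_span_add_finrank_le_of_subset_ker
    (facetTestMap_surjective ha hi₀ hj₂) (hyp1_inter_dualEdgeCone_subset_ker hi₀ hnb)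

end Neighbours

/-- Let `A = A₁ ⊔ A₂` be a two-sided independent set of a connected
bipartite graph `G ⊆ K_{m,n}`. If `H_{A₁} ∩ σ_G^∨` is a facet of `σ_G^∨` (its linear
span has dimension `m + n - 2`), then there is `A₂'` with `A₂ ⊆ A₂' ⊊ U₂` such that
`A₁ ⊔ A₂'` is a maximal two-sided independent set of `G`. -/
theorem exists_maximal_twoSided_of_facet (m n : ℕ) (E : Fin m → Fin n → Prop)
    [∀ i j, Decidable (E i j)] (hconn : (toGraph E).Connected)
    (A₁ : Finset (Fin m)) (A₂ : Finset (Fin n)) (hA : TwoSidedIndep E A₁ A₂)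
    (hfacet : Module.finrank ℝ (Submodule.span ℝ (hyp1 E A₁ ∩ dualEdgeCone E))
      = m + n - 2) :
    ∃ A₂' : Finset (Fin n), A₂ ⊆ A₂' ∧ TwoSidedMaxIndep E A₁ A₂' := by
  obtain ⟨⟨a, ha⟩, hA₁, ⟨j₂, hj₂⟩, -, hind⟩ := hA
  have hA₂ : A₂ ⊆ (nbrR E A₁)ᶜ := isIndepPair_iff_subset_compl_nbrR.mp hind
  have hj₂N : j₂ ∉ nbrR E A₁ := mem_compl.mp (hA₂ hj₂)
  obtain ⟨j, haj⟩ := exists_adj_of_connected hconn a j₂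
  refine ⟨(nbrR E A₁)ᶜ, hA₂, twoSidedMaxIndep_compl_nbrR ⟨a, ha⟩ hA₁
    ⟨j, mem_nbrR.mpr ⟨a, ha, haj⟩⟩ ⟨j₂, hA₂ hj₂⟩ fun i hnb => ?_⟩
  by_contra hi
  have := finrank_span_hyp1_inter_dualEdgeCone_add_three_le ha hi hj₂N hnb
  omega

end ToricBipartite
end

section
/- Let G ⊆ K_{m,n} be a connected bipartite graph and let A ∈ I_G^(1) be a first independent set. Let Val(A) ∈ ℝ^{m+n} be the degree sequence of the associated subgraph G{A}, i.e., the vector whose v-th coordinate is the number of edges of G{A} incident to the vertex v. Then Val(A) lies in the relative interior (intrinsic interior) of the facet H_A ∩ σ_G^∨ of the dual edge cone σ_G^∨. -/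
/-!
Common setup: a bipartite graph `G ⊆ K_{m,n}` is encoded by an edge relation
`E : Fin m → Fin n → Prop` (vertex set `V = Fin m ⊕ Fin n`, with `U₁` the left
summand and `U₂` the right summand).
-/

namespace ToricBipartite

open Sum Finset

variable {m n : ℕ}

/-!
Every edge `(i, j)` of `G` with `i ∈ A₁` has `j ∈ N(A₁)`, so the linear form
`Σ_{A₁} x - Σ_{N(A₁)} x` is `≤ 0` on the generators `e^i + f^j` of `σ_G^∨` and vanishes exactly
on the edges with `i ∈ A₁ ↔ j ∈ N(A₁)`. These are the edges of `G{A}` (for a two-sided maximal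
`A` because then `A₂ = U₂ ∖ N(A₁)`), hence `H_A ∩ σ_G^∨ = σ_{G{A}}^∨`. The vector `Val(A)` is the
sum of the generators of that cone, i.e. the image of `(1, …, 1)`, a point of the open positive
orthant, under a linear map, and a linear map to a finite-dimensional space is open onto its range.
-/

section ConicHull

variable {ι V : Type*} [Fintype ι] [AddCommGroup V] [Module ℝ V]

def conicHull (p : ι → Prop) (v : ι → V) : Set V :=
  {x | ∃ c : ι → ℝ, (∀ k, 0 ≤ c k) ∧ (∀ k, c k ≠ 0 → p k) ∧ x = ∑ k, c k • v k}

theorem conicHull_inter_ker (p : ι → Prop) (v : ι → V) (ℓ : V →ₗ[ℝ] ℝ)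
    (hℓ : (∀ k, p k → 0 ≤ ℓ (v k)) ∨ (∀ k, p k → ℓ (v k) ≤ 0)) :
    conicHull p v ∩ {x | ℓ x = 0} = conicHull (fun k => p k ∧ ℓ (v k) = 0) v := by
  ext x
  constructor
  · rintro ⟨⟨c, hc0, hcp, rfl⟩, hx⟩
    have hsum : ∑ k, c k * ℓ (v k) = 0 := by simpa [map_sum] using hx
    have hterm : ∀ k, c k * ℓ (v k) = 0 := by
      rcases hℓ with hℓ | hℓ
      · refine fun k => (sum_eq_zero_iff_of_nonneg fun k _ => ?_).1 hsum k (mem_univ k)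
        by_cases hk : c k = 0
        · simp [hk]
        · exact mul_nonneg (hc0 k) (hℓ k (hcp k hk))
      · refine fun k => (sum_eq_zero_iff_of_nonpos fun k _ => ?_).1 hsum k (mem_univ k)
        by_cases hk : c k = 0
        · simp [hk]
        · exact mul_nonpos_of_nonneg_of_nonpos (hc0 k) (hℓ k (hcp k hk))
    exact ⟨c, hc0, fun k hk => ⟨hcp k hk, (mul_eq_zero.1 (hterm k)).resolve_left hk⟩, rfl⟩
  · rintro ⟨c, hc0, hcp, rfl⟩
    refine ⟨⟨c, hc0, fun k hk => (hcp k hk).1, rfl⟩, ?_⟩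
    simp only [Set.mem_ofPred_eq, map_sum, map_smul, smul_eq_mul]
    refine sum_eq_zero fun k _ => ?_
    by_cases hk : c k = 0
    · simp [hk]
    · simp [(hcp k hk).2]

end ConicHull

section IntrinsicInterior

variable {W V : Type*} [AddCommGroup W] [Module ℝ W] [TopologicalSpace W]
  [IsTopologicalAddGroup W] [ContinuousSMul ℝ W]
  [AddCommGroup V] [Module ℝ V] [TopologicalSpace V] [IsTopologicalAddGroup V]
  [ContinuousSMul ℝ V] [T2Space V] [FiniteDimensional ℝ V]

/-- `L` is open onto its range, and that range contains the affine span of `L '' K`. -/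
theorem image_subset_intrinsicInterior_image (L : W →ₗ[ℝ] V) {O K : Set W} (hO : IsOpen O)
    (hOK : O ⊆ K) : L '' O ⊆ intrinsicInterior ℝ (L '' K) := by
  rintro _ ⟨x, hxO, rfl⟩
  obtain ⟨T, hT, hTO⟩ := isOpen_induced_iff.1 <|
    L.rangeRestrict.isOpenMap_of_finiteDimensional L.surjective_rangeRestrict O hO
  have hspan : affineSpan ℝ (L '' K) ≤ (LinearMap.range L).toAffineSubspace :=
    affineSpan_le.2 <| by rintro _ ⟨y, -, rfl⟩; exact ⟨y, rfl⟩
  refine mem_intrinsicInterior.2 ⟨⟨L x, subset_affineSpan ℝ _ ⟨x, hOK hxO, rfl⟩⟩,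
    mem_interior.2 ⟨Subtype.val ⁻¹' T, ?_, hT.preimage continuous_subtype_val, ?_⟩, rfl⟩
  · rintro ⟨z, hz⟩ hzT
    obtain ⟨y, hyO, hy⟩ : (⟨z, hspan hz⟩ : LinearMap.range L) ∈ L.rangeRestrict '' O :=
      hTO ▸ hzT
    exact ⟨y, hOK hyO, congrArg Subtype.val hy⟩
  · exact (hTO ▸ ⟨x, hxO, rfl⟩ : L.rangeRestrict x ∈ Subtype.val ⁻¹' T)

theorem sum_mem_intrinsicInterior_conicHull {ι : Type*} [Fintype ι] (p : ι → Prop)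
    [DecidablePred p] (v : ι → V) :
    ∑ k ∈ univ.filter p, v k ∈ intrinsicInterior ℝ (conicHull p v) := by
  set L := Fintype.linearCombination ℝ fun k => if p k then v k else 0
  have hcone : conicHull p v = L '' Set.univ.pi fun _ => Set.Ici 0 := by
    ext x
    constructor
    · rintro ⟨c, hc0, hcp, rfl⟩
      refine ⟨c, fun k _ => hc0 k, ?_⟩
      rw [Fintype.linearCombination_apply]
      refine sum_congr rfl fun k _ => ?_
      by_cases hk : p k
      · simp [hk]
      · simp [hk, not_imp_comm.1 (hcp k) hk]
    · rintro ⟨c, hc0, rfl⟩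
      refine ⟨fun k => if p k then c k else 0, fun k => ?_, fun k hk => ?_, ?_⟩
      · dsimp only
        split_ifs
        exacts [hc0 k (Set.mem_univ k), le_rfl]
      · by_contra h
        simp [h] at hk
      · rw [Fintype.linearCombination_apply]
        refine sum_congr rfl fun k _ => ?_
        by_cases hk : p k <;> simp [hk]
  have hsum : ∑ k ∈ univ.filter p, v k = L 1 := by
    simp [L, Fintype.linearCombination_apply, sum_filter]
  rw [hcone, hsum]
  exact image_subset_intrinsicInterior_image L (isOpen_set_pi Set.finite_univ fun _ _ => isOpen_Ioi)
    (Set.pi_mono fun _ _ => Set.Ioi_subset_Ici_self) ⟨1, fun _ _ => by simp, rfl⟩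

end IntrinsicInterior

section Graph

variable (E P : Fin m → Fin n → Prop)

theorem dualEdgeCone_eq_conicHull :
    dualEdgeCone E = conicHull (fun k : Fin m × Fin n => E k.1 k.2) fun k => gen k.1 k.2 := by
  ext x
  constructor
  · rintro ⟨c, hc0, hcE, rfl⟩
    exact ⟨fun k => c k.1 k.2, fun _ => hc0 _ _, fun _ => hcE _ _, (Fintype.sum_prod_type' _).symm⟩
  · rintro ⟨c, hc0, hcE, rfl⟩
    exact ⟨fun i j => c (i, j), fun _ _ => hc0 _, fun _ _ => hcE _, Fintype.sum_prod_type _⟩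

theorem valVec_eq_sum_gen [∀ i j, Decidable (P i j)] :
    valVec P = ∑ k ∈ univ.filter (fun k : Fin m × Fin n => P k.1 k.2), gen k.1 k.2 := by
  rw [sum_filter, Fintype.sum_prod_type]
  funext v
  rcases v with i | j
  · simp only [valVec, elim_inl, gen, Finset.sum_apply, ite_apply, Pi.add_apply,
      Pi.single_apply, inl.injEq, reduceCtorEq, if_false, add_zero, Pi.zero_apply]
    rw [sum_eq_single i (fun x _ hx => by simp [Ne.symm hx]) (by simp)]
    simp
  · simp only [valVec, elim_inr, gen, Finset.sum_apply, ite_apply, Pi.add_apply,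
      Pi.single_apply, inr.injEq, reduceCtorEq, if_false, zero_add, Pi.zero_apply]
    rw [sum_comm, sum_eq_single j (fun x _ hx => by simp [Ne.symm hx]) (by simp)]
    simp

theorem valVec_mem_intrinsicInterior_dualEdgeCone [∀ i j, Decidable (P i j)] :
    valVec P ∈ intrinsicInterior ℝ (dualEdgeCone P) := by
  rw [valVec_eq_sum_gen, dualEdgeCone_eq_conicHull]
  exact sum_mem_intrinsicInterior_conicHull _ _

def cutForm (S₁ : Finset (Fin m)) (S₂ : Finset (Fin n)) : ((Fin m ⊕ Fin n) → ℝ) →ₗ[ℝ] ℝ :=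
  ∑ i ∈ S₁, LinearMap.proj (inl i) - ∑ j ∈ S₂, LinearMap.proj (inr j)

theorem cutForm_apply (S₁ : Finset (Fin m)) (S₂ : Finset (Fin n)) (x : (Fin m ⊕ Fin n) → ℝ) :
    cutForm S₁ S₂ x = ∑ i ∈ S₁, x (inl i) - ∑ j ∈ S₂, x (inr j) := by
  simp [cutForm, LinearMap.sum_apply]

theorem cutForm_gen (S₁ : Finset (Fin m)) (S₂ : Finset (Fin n)) (i : Fin m) (j : Fin n) :
    cutForm S₁ S₂ (gen i j) = (if i ∈ S₁ then 1 else 0) - (if j ∈ S₂ then 1 else 0) := by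
  simp [cutForm_apply, gen, Pi.single_apply]

theorem setOf_sum_eq_inter_dualEdgeCone (S₁ : Finset (Fin m)) (S₂ : Finset (Fin n))
    (hS : (∀ i j, E i j → i ∈ S₁ → j ∈ S₂) ∨ (∀ i j, E i j → j ∈ S₂ → i ∈ S₁))
    (hP : ∀ i j, P i j ↔ E i j ∧ (i ∈ S₁ ↔ j ∈ S₂)) :
    {x | ∑ i ∈ S₁, x (inl i) = ∑ j ∈ S₂, x (inr j)} ∩ dualEdgeCone E = dualEdgeCone P := by
  have hker : {x | ∑ i ∈ S₁, x (inl i) = ∑ j ∈ S₂, x (inr j)} = {x | cutForm S₁ S₂ x = 0} := by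
    ext x
    simp [cutForm_apply, sub_eq_zero]
  rw [Set.inter_comm, hker, dualEdgeCone_eq_conicHull, dualEdgeCone_eq_conicHull,
    conicHull_inter_ker]
  · congr 1
    ext ⟨i, j⟩
    rw [hP, cutForm_gen]
    by_cases hi : i ∈ S₁ <;> by_cases hj : j ∈ S₂ <;> simp [hi, hj]
  · rcases hS with hS | hS
    · refine Or.inr fun ⟨i, j⟩ hE => ?_
      by_cases hi : i ∈ S₁
      · simp [cutForm_gen, hi, hS i j hE hi]
      · rw [cutForm_gen, if_neg hi]
        split_ifs <;> norm_num
    · refine Or.inl fun ⟨i, j⟩ hE => ?_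
      by_cases hj : j ∈ S₂
      · simp [cutForm_gen, hj, hS i j hE hj]
      · rw [cutForm_gen, if_neg hj]
        split_ifs <;> norm_num

end Graph


section IndependentSets

variable {E : Fin m → Fin n → Prop} [∀ i j, Decidable (E i j)]

theorem mem_nbrR_s11 {A : Finset (Fin m)} {i : Fin m} {j : Fin n} (hE : E i j) (hi : i ∈ A) :
    j ∈ nbrR E A :=
  mem_filter.2 ⟨mem_univ j, i, hi, hE⟩

theorem mem_nbrL {B : Finset (Fin n)} {i : Fin m} {j : Fin n} (hE : E i j) (hj : j ∈ B) :
    i ∈ nbrL E B :=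
  mem_filter.2 ⟨mem_univ i, j, hj, hE⟩

theorem hyp1_inter_dualEdgeCone (P : Fin m → Fin n → Prop) (A : Finset (Fin m))
    (hP : ∀ i j, P i j ↔ E i j ∧ (i ∈ A ∨ j ∉ nbrR E A)) :
    hyp1 E A ∩ dualEdgeCone E = dualEdgeCone P := by
  refine setOf_sum_eq_inter_dualEdgeCone E P A (nbrR E A)
    (Or.inl fun i j hE hi => mem_nbrR_s11 hE hi) fun i j => (hP i j).trans ?_
  have := mem_nbrR_s11 (E := E) (A := A) (i := i) (j := j)
  tauto

theorem hyp2_inter_dualEdgeCone (P : Fin m → Fin n → Prop) (B : Finset (Fin n))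
    (hP : ∀ i j, P i j ↔ E i j ∧ (j ∈ B ∨ i ∉ nbrL E B)) :
    hyp2 E B ∩ dualEdgeCone E = dualEdgeCone P := by
  have hflip : hyp2 E B = {x | ∑ i ∈ nbrL E B, x (inl i) = ∑ j ∈ B, x (inr j)} :=
    Set.ext fun x => eq_comm
  rw [hflip]
  refine setOf_sum_eq_inter_dualEdgeCone E P (nbrL E B) B
    (Or.inr fun i j hE hj => mem_nbrL hE hj) fun i j => (hP i j).trans ?_
  have := mem_nbrL (E := E) (B := B) (i := i) (j := j)
  tauto

theorem TwoSidedMaxIndep.mem_right_iff {A₁ : Finset (Fin m)} {A₂ : Finset (Fin n)}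
    (h : TwoSidedMaxIndep E A₁ A₂) {j : Fin n} : j ∈ A₂ ↔ j ∉ nbrR E A₁ := by
  constructor
  · intro hj hjN
    obtain ⟨i, hi, hE⟩ := (mem_filter.1 hjN).2
    exact h.1.2.2.2.2 i hi j hj hE
  · intro hjN
    have hindep : IsIndepPair E A₁ (insert j A₂) := by
      intro i hi j' hj' hE
      rcases mem_insert.1 hj' with rfl | hj'
      · exact hjN (mem_nbrR_s11 hE hi)
      · exact h.1.2.2.2.2 i hi j' hj' hE
    rw [← (h.2 A₁ _ hindep subset_rfl (subset_insert j A₂)).2]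
    exact mem_insert_self j A₂

theorem TwoSidedMaxIndep.assoc_iff {A₁ : Finset (Fin m)} {A₂ : Finset (Fin n)}
    (h : TwoSidedMaxIndep E A₁ A₂) (i : Fin m) (j : Fin n) :
    assoc E A₁ A₂ i j ↔ E i j ∧ (i ∈ A₁ ∨ j ∉ nbrR E A₁) := by
  simp only [assoc, if_neg h.1.2.2.1.ne_empty, if_neg h.1.1.ne_empty, h.mem_right_iff]

theorem assoc_iff_of_right_eq_empty {A₁ : Finset (Fin m)} {A₂ : Finset (Fin n)} (h : A₂ = ∅)
    (i : Fin m) (j : Fin n) : assoc E A₁ A₂ i j ↔ E i j ∧ (i ∈ A₁ ∨ j ∉ nbrR E A₁) := by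
  simp only [assoc, if_pos h]

theorem assoc_iff_of_left_eq_empty {A₁ : Finset (Fin m)} {A₂ : Finset (Fin n)} (h₁ : A₁ = ∅)
    (h₂ : A₂ ≠ ∅) (i : Fin m) (j : Fin n) :
    assoc E A₁ A₂ i j ↔ E i j ∧ (j ∈ A₂ ∨ i ∉ nbrL E A₂) := by
  simp only [assoc, if_neg h₂, if_pos h₁]

end IndependentSets

theorem valVec_mem_intrinsicInterior_general (m n : ℕ) (E : Fin m → Fin n → Prop)
    [∀ i j, Decidable (E i j)]
    (A₁ : Finset (Fin m)) (A₂ : Finset (Fin n)) (hA : FirstIndep E A₁ A₂) :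
    valVec (assoc E A₁ A₂) ∈
      intrinsicInterior ℝ (hypA E A₁ A₂ ∩ dualEdgeCone E) := by
  suffices hface : hypA E A₁ A₂ ∩ dualEdgeCone E = dualEdgeCone (assoc E A₁ A₂) from
    hface ▸ valVec_mem_intrinsicInterior_dualEdgeCone _
  rcases hA.1 with hmax | ⟨hA₂, hA₁, -, -⟩ | ⟨hA₁, hA₂, -, -⟩
  · rw [hypA, if_neg hmax.1.1.ne_empty]
    exact hyp1_inter_dualEdgeCone _ A₁ hmax.assoc_iff
  · rw [hypA, if_neg hA₁.ne_empty]
    exact hyp1_inter_dualEdgeCone _ A₁ (assoc_iff_of_right_eq_empty hA₂)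
  · rw [hypA, if_pos hA₁]
    exact hyp2_inter_dualEdgeCone _ A₂ (assoc_iff_of_left_eq_empty hA₁ hA₂.ne_empty)

/-- For a first independent set `A ∈ I_G^(1)` of a connected bipartite
graph `G ⊆ K_{m,n}`, the degree sequence `Val(A)` of the associated subgraph `G{A}` lies
in the relative (intrinsic) interior of the facet `H_A ∩ σ_G^∨` of the dual edge cone. -/
theorem valVec_mem_intrinsicInterior (m n : ℕ) (E : Fin m → Fin n → Prop)
    [∀ i j, Decidable (E i j)] (hconn : (toGraph E).Connected)
    (A₁ : Finset (Fin m)) (A₂ : Finset (Fin n)) (hA : FirstIndep E A₁ A₂) :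
    valVec (assoc E A₁ A₂) ∈
      intrinsicInterior ℝ (hypA E A₁ A₂ ∩ dualEdgeCone E) :=
  valVec_mem_intrinsicInterior_general m n E A₁ A₂ hA

end ToricBipartite
end

section
/- Let G ⊆ K_{m,n} be a connected bipartite graph, let a ≠ a' be vertices of U₁, and suppose A = U₁ ∖ {a} and A' = U₁ ∖ {a'} are first independent sets of G. Then the intersection subgraph G{A} ∩ G{A'} (the spanning subgraph whose edges are the common edges of G{A} and G{A'}) has exactly three connected components (isolated vertices counting as components) — equivalently, the corresponding pair of extremal rays spans a two-dimensional face of the edge cone — if and only if the induced subgraph G[(U₁ ∖ {a,a'}) ⊔ U₂] is connected. -/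
/-!
Common setup: a bipartite graph `G ⊆ K_{m,n}` is encoded by an edge relation
`E : Fin m → Fin n → Prop` (vertex set `V = Fin m ⊕ Fin n`, with `U₁` the left
summand and `U₂` the right summand).
-/

namespace ToricBipartite

open Sum Finset

variable {m n : ℕ}

/-!
Because `U₁ ∖ {a}` lies in no two-sided independent set and `G` is connected, its neighbourhood
is all of `U₂`, so `G{U₁ ∖ {a}}` is `G` with the edges at `a` deleted. Hence `G{A} ∩ G{A'}` is `G`
with the edges at `a` and `a'` deleted: its components are the two isolated vertices `a`, `a'`
together with the components of `G[(U₁ ∖ {a, a'}) ⊔ U₂]`.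
-/

section IsolatedVertices

open SimpleGraph

variable {V : Type*} {G : SimpleGraph V} {W : Set V}

theorem _root_.SimpleGraph.connected_iff_natCard_connectedComponent_eq_one :
    G.Connected ↔ Nat.card G.ConnectedComponent = 1 := by
  rw [Nat.card_eq_one_iff_unique, connected_iff]
  refine ⟨fun ⟨hpre, hV⟩ =>
      ⟨hpre.subsingleton_connectedComponent, hV.map G.connectedComponentMk⟩,
    fun ⟨_, ⟨C⟩⟩ => ⟨fun u v => ConnectedComponent.exact (Subsingleton.elim _ _), ?_⟩⟩
  obtain ⟨v, -⟩ := C.exists_rep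
  exact ⟨v⟩

theorem _root_.SimpleGraph.Walk.support_subset_of_support_subset (hW : G.support ⊆ W)
    {u v : V} (p : G.Walk u v) (hu : u ∈ W) : ∀ x ∈ p.support, x ∈ W := by
  induction p with
  | nil => simpa
  | cons h p ih =>
    simp only [Walk.support_cons, List.mem_cons, forall_eq_or_imp]
    exact ⟨hu, ih (hW (G.mem_support.2 ⟨_, h.symm⟩))⟩

theorem _root_.SimpleGraph.Reachable.induce_of_support_subset (hW : G.support ⊆ W)
    {u v : V} (hu : u ∈ W) (hv : v ∈ W) (h : G.Reachable u v) :
    (G.induce W).Reachable ⟨u, hu⟩ ⟨v, hv⟩ := by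
  obtain ⟨p⟩ := h
  exact ⟨p.induce W (p.support_subset_of_support_subset hW hu)⟩

theorem _root_.SimpleGraph.Reachable.eq_of_notMem_support {u v : V} (hu : u ∉ G.support)
    (h : G.Reachable u v) : u = v := by
  by_contra huv
  obtain ⟨w, hw⟩ := h.nonempty_neighborSet_left huv
  exact hu (G.mem_support.2 ⟨w, hw⟩)

/-- Every component of `G` either meets `W`, where it is a component of `G[W]`, or is a single
vertex outside `W`. -/
theorem _root_.SimpleGraph.natCard_connectedComponent_of_support_subset [Finite V]
    (hW : G.support ⊆ W) :
    Nat.card G.ConnectedComponent =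
      Nat.card (G.induce W).ConnectedComponent + Nat.card ↥Wᶜ := by
  let f : (G.induce W).ConnectedComponent ⊕ ↥Wᶜ → G.ConnectedComponent :=
    Sum.elim (ConnectedComponent.map (Embedding.induce W).toHom) fun v => G.connectedComponentMk v
  have hsingle (v : ↥Wᶜ) (u : V) (h : G.Reachable v u) : u = v :=
    (h.eq_of_notMem_support fun hv => v.2 (hW hv)).symm
  have hinj : f.Injective := by
    rintro (C | v) (D | w) h
    · induction C using ConnectedComponent.ind with | h u => ?_
      induction D using ConnectedComponent.ind with | h w => ?_
      have huw : G.Reachable u w := ConnectedComponent.exact h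
      exact congrArg Sum.inl (ConnectedComponent.sound (huw.induce_of_support_subset hW u.2 w.2))
    · induction C using ConnectedComponent.ind with | h u => ?_
      have huw : G.Reachable w u := ConnectedComponent.exact h.symm
      exact absurd (hsingle w u huw ▸ u.2) w.2
    · induction D using ConnectedComponent.ind with | h w => ?_
      have hvw : G.Reachable v w := ConnectedComponent.exact h
      exact absurd (hsingle v w hvw ▸ w.2) v.2
    · exact congrArg Sum.inr (Subtype.ext (hsingle v w (ConnectedComponent.exact h)).symm)
  have hsurj : f.Surjective := by
    refine ConnectedComponent.ind fun v => ?_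
    by_cases hv : v ∈ W
    · exact ⟨.inl ((G.induce W).connectedComponentMk ⟨v, hv⟩), rfl⟩
    · exact ⟨.inr ⟨v, hv⟩, rfl⟩
  rw [← Nat.card_sum, Nat.card_congr (Equiv.ofBijective f ⟨hinj, hsurj⟩)]

end IsolatedVertices

section Bipartite

variable (E : Fin m → Fin n → Prop)

@[simp]
theorem toGraph_adj_inl_inr {i : Fin m} {j : Fin n} :
    (toGraph E).Adj (inl i) (inr j) ↔ E i j := by
  simp [toGraph]

@[simp]
theorem toGraph_adj_inr_inl {i : Fin m} {j : Fin n} :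
    (toGraph E).Adj (inr j) (inl i) ↔ E i j := by
  simp [toGraph]

@[simp]
theorem not_toGraph_adj_inl_inl {i i' : Fin m} : ¬ (toGraph E).Adj (inl i) (inl i') := by
  simp [toGraph]

@[simp]
theorem not_toGraph_adj_inr_inr {j j' : Fin n} : ¬ (toGraph E).Adj (inr j) (inr j') := by
  simp [toGraph]

theorem inducedConnected_iff_numComponents (S : Finset (Fin m)) (T : Finset (Fin n)) :
    InducedConnected E S T ↔
      numComponents (fun i j => E i j ∧ i ∈ S ∧ j ∈ T) = #Sᶜ + #Tᶜ + 1 := by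
  set W : Set (Fin m ⊕ Fin n) := inl '' (S : Set (Fin m)) ∪ inr '' (T : Set (Fin n))
  have hsupp : (toGraph fun i j => E i j ∧ i ∈ S ∧ j ∈ T).support ⊆ W := by
    rintro (i | j) ⟨(i' | j'), h⟩ <;> simp_all [W]
  have hinduce :
      (toGraph fun i j => E i j ∧ i ∈ S ∧ j ∈ T).induce W = (toGraph E).induce W := by
    ext ⟨(i | j), hu⟩ ⟨(i' | j'), hv⟩ <;> simp [W] at hu hv <;> simp [hu, hv]
  have hcompl : Nat.card ↥Wᶜ = #Sᶜ + #Tᶜ := by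
    have : Wᶜ = ↑(Sᶜ.disjSum Tᶜ) := by ext (i | j) <;> simp [W]
    rw [this, Nat.card_coe_set_eq, Set.ncard_coe_finset, card_disjSum]
  change ((toGraph E).induce W).Connected ↔ Nat.card (toGraph _).ConnectedComponent = _
  rw [SimpleGraph.natCard_connectedComponent_of_support_subset hsupp, hinduce, hcompl,
    SimpleGraph.connected_iff_natCard_connectedComponent_eq_one]
  omega

end Bipartite

section OneSided

variable {E : Fin m → Fin n → Prop}

theorem InIStar.not_subset_twoSidedIndep {A : Finset (Fin m)} (hA : InIStar E A ∅)
    (hne : A.Nonempty) : ¬ ∃ B₁ B₂, TwoSidedIndep E B₁ B₂ ∧ A ⊆ B₁ := by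
  rcases hA with ⟨⟨-, -, h, -⟩, -⟩ | ⟨-, -, -, h⟩ | ⟨rfl, -⟩
  · exact absurd h not_nonempty_empty
  · exact h
  · exact absurd hne not_nonempty_empty

/-- Otherwise `A ⊔ (U₂ ∖ N(A))` would be a two-sided independent set containing `A`. -/
theorem nbrR_eq_univ_of_not_subset_twoSidedIndep [∀ i j, Decidable (E i j)]
    {A : Finset (Fin m)} (hA : A ≠ univ) (hN : (nbrR E A).Nonempty)
    (h : ¬ ∃ B₁ B₂, TwoSidedIndep E B₁ B₂ ∧ A ⊆ B₁) :
    nbrR E A = univ := by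
  by_contra hN'
  refine h ⟨A, (nbrR E A)ᶜ, ⟨?_, hA, ?_, ?_, ?_⟩, subset_rfl⟩
  · obtain ⟨j, hj⟩ := hN
    obtain ⟨i, hi, -⟩ := (mem_filter.1 hj).2
    exact ⟨i, hi⟩
  · rwa [nonempty_iff_ne_empty, Ne, compl_eq_empty_iff]
  · exact (compl_ne_univ_iff_nonempty _).2 hN
  · intro i hi j hj hij
    exact mem_compl.1 hj (mem_filter.2 ⟨mem_univ j, i, hi, hij⟩)

theorem nbrR_compl_singleton_eq_univ [∀ i j, Decidable (E i j)] (hconn : (toGraph E).Connected)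
    {a b : Fin m} (hab : a ≠ b) (hA : InIStar E {a}ᶜ ∅) : nbrR E {a}ᶜ = univ := by
  have hb : b ∈ ({a}ᶜ : Finset (Fin m)) := by simpa using hab.symm
  refine nbrR_eq_univ_of_not_subset_twoSidedIndep
    ((compl_ne_univ_iff_nonempty _).2 (singleton_nonempty a)) ?_
    (hA.not_subset_twoSidedIndep ⟨b, hb⟩)
  obtain ⟨(i | j), hj⟩ := (hconn.preconnected (inl b) (inl a)).nonempty_neighborSet_left
    (by simpa using hab.symm)
  · simp at hj
  · exact ⟨j, mem_filter.2 ⟨mem_univ j, b, hb, by simpa using hj⟩⟩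

theorem assoc_empty_iff_of_nbrR_eq_univ [∀ i j, Decidable (E i j)] {A : Finset (Fin m)}
    (h : nbrR E A = univ) (i : Fin m) (j : Fin n) : assoc E A ∅ i j ↔ E i j ∧ i ∈ A := by
  simp [assoc, h]

end OneSided

/-- Let `A = U₁ ∖ {a}` and `A' = U₁ ∖ {a'}` (with `a ≠ a'`) be first
independent sets of a connected bipartite graph `G ⊆ K_{m,n}`. Then the intersection
subgraph `G{A} ∩ G{A'}` has exactly three connected components (equivalently, the
corresponding pair of extremal rays spans a 2-face of the edge cone) if and only if the
induced subgraph `G[(U₁ ∖ {a, a'}) ⊔ U₂]` is connected. -/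
theorem two_face_AA (m n : ℕ) (E : Fin m → Fin n → Prop)
    [∀ i j, Decidable (E i j)] (hconn : (toGraph E).Connected)
    (a a' : Fin m) (hne : a ≠ a')
    (hA : FirstIndep E ({a}ᶜ) ∅) (hA' : FirstIndep E ({a'}ᶜ) ∅) :
    numComponents (fun i j => assoc E ({a}ᶜ) ∅ i j ∧ assoc E ({a'}ᶜ) ∅ i j) = 3 ↔
      InducedConnected E ({a, a'} : Finset (Fin m))ᶜ Finset.univ := by
  have hN := nbrR_compl_singleton_eq_univ hconn hne hA.1
  have hN' := nbrR_compl_singleton_eq_univ hconn hne.symm hA'.1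
  have hrel : (fun i j => assoc E ({a}ᶜ) ∅ i j ∧ assoc E ({a'}ᶜ) ∅ i j) =
      fun i j => E i j ∧ i ∈ ({a, a'} : Finset (Fin m))ᶜ ∧ j ∈ univ := by
    ext i j
    simp only [assoc_empty_iff_of_nbrR_eq_univ hN, assoc_empty_iff_of_nbrR_eq_univ hN', mem_compl,
      mem_singleton, compl_insert, mem_erase, ne_eq, mem_univ, and_true]
    tauto
  rw [hrel, inducedConnected_iff_numComponents, compl_compl, card_pair hne, compl_univ, card_empty]

end ToricBipartite
end
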